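/- If ∏_{k≥0} α_k = 0 and μ = 1 + ∑_{j≥1} ∏_{i=0}^{j-1} α_i = ∞, then in the Reverse Firework process the rumor survives almost surely (infinitely many individuals are informed) but the asymptotic proportion of informed individuals is zero: N(n)/n → 0 almost surely. -/

import Mathlib

open MeasureTheory ProbabilityTheory Filter Finset

/-!
The informed sites are the renewal times `0 = s₀ < s₁ < ⋯`, where `s_{j+1} - s_j` is the first
`k ≥ 1` with `R (s_j + k) ≥ k`. Given the values of the first gaps, the event that the next one
equals `t` only involves the `t` radii following the current site, so by independence the gaps
are i.i.d. with `P (gap > k) = ∏_{i<k} α_i`. Since `∏ α_i = 0` every gap is finite a.s. and the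
rumor survives; since the mean `∑_k ∏_{i<k} α_i` of the gap is infinite, the strong law applied
to the truncated gaps gives `s_j / j → ∞` a.s., which is `N(n) / n → 0`.
-/

namespace ReverseFirework

noncomputable section

/-- The value `0` (that of `sInf ∅`) encodes that no later site hears `b`. -/
def nextGap (r : ℕ → ℕ) (b : ℕ) : ℕ :=
  sInf {k | 1 ≤ k ∧ k ≤ r (b + k)}

def site (r : ℕ → ℕ) (b : ℕ) : ℕ → ℕ
  | 0 => b
  | j + 1 => site r b j + nextGap r (site r b j)

def gap (r : ℕ → ℕ) (b j : ℕ) : ℕ :=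
  nextGap r (site r b j)

def Unheard (r : ℕ → ℕ) (b K : ℕ) : Prop :=
  ∀ k < K, r (b + (k + 1)) ≤ k

variable {r : ℕ → ℕ} {b : ℕ}

lemma nextGap_pos_and_le {k : ℕ} (hk : 1 ≤ k) (hr : k ≤ r (b + k)) :
    0 < nextGap r b ∧ nextGap r b ≤ k :=
  ⟨(Nat.sInf_mem (s := {k | 1 ≤ k ∧ k ≤ r (b + k)}) ⟨k, hk, hr⟩).1, Nat.sInf_le ⟨hk, hr⟩⟩

lemma nextGap_le_apply (h : nextGap r b ≠ 0) : nextGap r b ≤ r (b + nextGap r b) :=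
  (Nat.sInf_mem (Nat.nonempty_of_pos_sInf (Nat.pos_of_ne_zero h))).2

lemma nextGap_eq_zero_or_lt_iff {K : ℕ} : nextGap r b = 0 ∨ K < nextGap r b ↔ Unheard r b K := by
  constructor
  · intro h k hk
    by_contra! hr
    have := nextGap_pos_and_le (b := b) (Nat.le_add_left 1 k) hr
    omega
  · intro h
    by_contra! hK
    have := nextGap_le_apply (r := r) (b := b) (by omega)
    have := h (nextGap r b - 1) (by omega)
    rw [Nat.sub_add_cancel (by omega)] at this
    omega

lemma nextGap_eq_zero_iff : nextGap r b = 0 ↔ ∀ K, Unheard r b K := by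
  simp only [← nextGap_eq_zero_or_lt_iff]
  exact ⟨fun h K => Or.inl h, fun h => (h (nextGap r b)).resolve_right (lt_irrefl _)⟩

lemma nextGap_eq_succ_iff {s : ℕ} :
    nextGap r b = s + 1 ↔ Unheard r b s ∧ ¬ Unheard r b (s + 1) := by
  rw [← nextGap_eq_zero_or_lt_iff, ← nextGap_eq_zero_or_lt_iff]
  omega

lemma site_succ_eq (j : ℕ) : site r b (j + 1) = site r (b + nextGap r b) j := by
  induction j with
  | zero => rfl
  | succ j ih => rw [site, ih, site]

lemma gap_succ (j : ℕ) : gap r b (j + 1) = gap r (b + nextGap r b) j := by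
  rw [gap, gap, site_succ_eq]

lemma gaps_eq_iff {j : ℕ} (x : Fin (j + 1) → ℕ) :
    (∀ i : Fin (j + 1), gap r b i = x i) ↔
      nextGap r b = x 0 ∧ ∀ i : Fin j, gap r (b + x 0) i = x i.succ := by
  rw [Fin.forall_fin_succ]
  refine and_congr_right fun h => ?_
  simp only [Fin.val_succ, gap_succ, show nextGap r b = x 0 from h]

lemma site_eq_add_sum (j : ℕ) : site r b j = b + ∑ i ∈ range j, gap r b i := by
  induction j with
  | zero => rfl
  | succ j ih => rw [site, sum_range_succ, ← add_assoc, ← ih, gap]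

lemma site_strictMono (hr : ∀ b, nextGap r b ≠ 0) : StrictMono (site r b) :=
  strictMono_nat_of_lt_succ fun _ => Nat.lt_add_of_pos_right (Nat.pos_of_ne_zero (hr _))

def SpreadRule (r : ℕ → ℕ) (z : ℕ → Bool) : Prop :=
  ∀ n, 0 < n → (z n = true ↔ ∃ m < n, z m = true ∧ n - m ≤ r n)

lemma range_site_subset_setOf (hr : ∀ b, nextGap r b ≠ 0) {z : ℕ → Bool} (hz0 : z 0 = true)
    (hz : SpreadRule r z) : Set.range (site r 0) ⊆ {n | z n = true} := by
  rintro _ ⟨j, rfl⟩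
  induction j with
  | zero => exact hz0
  | succ j ih =>
    have hlt := site_strictMono hr (b := 0) j.lt_succ_self
    refine (hz _ (Nat.zero_lt_of_lt hlt)).2 ⟨site r 0 j, hlt, ih, ?_⟩
    rw [site, Nat.add_sub_cancel_left]
    exact nextGap_le_apply (hr _)

lemma setOf_subset_range_site (hr : ∀ b, nextGap r b ≠ 0) {z : ℕ → Bool} (hz : SpreadRule r z) :
    {n | z n = true} ⊆ Set.range (site r 0) := by
  intro n hn
  induction n using Nat.strong_induction_on with
  | _ n ih =>
  rcases Nat.eq_zero_or_pos n with rfl | hn0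
  · exact ⟨0, rfl⟩
  obtain ⟨m, hmn, hzm, hmr⟩ := (hz n hn0).1 hn
  obtain ⟨i, rfl⟩ := ih m hmn hzm
  have hmono := site_strictMono hr (b := 0)
  obtain ⟨j, hjn, hnj⟩ : ∃ j, site r 0 j < n ∧ n ≤ site r 0 (j + 1) := by
    have hex : ∃ j, n ≤ site r 0 (j + 1) := ⟨n, n.le_succ.trans (hmono.id_le _)⟩
    refine ⟨Nat.find hex, ?_, Nat.find_spec hex⟩
    rcases Nat.eq_zero_or_pos (Nat.find hex) with h | h
    · rwa [h]
    · have := Nat.find_min hex (Nat.sub_one_lt_of_lt h)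
      rwa [Nat.sub_add_cancel h, not_le] at this
  have hij : site r 0 i ≤ site r 0 j :=
    hmono.monotone (Nat.le_of_lt_succ (hmono.lt_iff_lt.1 (hmn.trans_le hnj)))
  have hgap := (nextGap_pos_and_le (r := r) (b := site r 0 j) (k := n - site r 0 j) (by omega)
    (by rw [Nat.add_sub_cancel' hjn.le]; omega)).2
  exact ⟨j + 1, le_antisymm (by rw [site]; omega) hnj⟩

lemma card_filter_le_card_site (hr : ∀ b, nextGap r b ≠ 0) {z : ℕ → Bool} (hz : SpreadRule r z)
    (n : ℕ) : #{i ∈ Icc 1 n | z i = true} ≤ #{j ∈ range (n + 1) | site r 0 j ≤ n} := by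
  refine (card_le_card fun i hi => ?_).trans (card_image_le (f := site r 0))
  simp only [mem_filter, mem_Icc] at hi
  obtain ⟨j, rfl⟩ := setOf_subset_range_site hr hz hi.2
  exact mem_image_of_mem _ (mem_filter.2
    ⟨mem_range.2 (Nat.lt_succ_of_le (((site_strictMono hr).id_le j).trans hi.1.2)), hi.1.2⟩)

end

lemma tendsto_card_filter_le_div_zero {f : ℕ → ℕ}
    (hf : Tendsto (fun j => (f j : ℝ) / j) atTop atTop) :
    Tendsto (fun n => (#{j ∈ range (n + 1) | f j ≤ n} : ℝ) / n) atTop (nhds 0) := by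
  refine tendsto_order.2 ⟨fun a ha => Eventually.of_forall fun n => ha.trans_le (by positivity),
    fun a ha => ?_⟩
  obtain ⟨J, hJ⟩ := eventually_atTop.1 (tendsto_atTop.1 hf (2 / a))
  -- beyond `J`, `f j ≤ n` forces `j ≤ a / 2 * n`
  have hcard (n : ℕ) : (#{j ∈ range (n + 1) | f j ≤ n} : ℝ) ≤ J + 2 + a / 2 * n := by
    have hsub : #{j ∈ range (n + 1) | f j ≤ n} ≤ J + 2 + ⌊a / 2 * n⌋₊ := by
      refine (card_le_card (t := range (J + 1) ∪ range (⌊a / 2 * n⌋₊ + 1)) fun j hj => ?_).trans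
        ((card_union_le _ _).trans (by simp only [card_range]; omega))
      simp only [mem_filter, mem_range, mem_union] at hj ⊢
      by_cases hjJ : j ≤ J
      · exact Or.inl (by omega)
      refine Or.inr (Nat.lt_succ_of_le (Nat.le_floor ?_))
      have hj0 : (0 : ℝ) < j := by exact_mod_cast (show 0 < j by omega)
      have := (le_div_iff₀ hj0).1 (hJ j (by omega))
      have : (f j : ℝ) ≤ n := by exact_mod_cast hj.2
      calc (j : ℝ) = a / 2 * (2 / a * j) := by field_simp
        _ ≤ a / 2 * n := by gcongr; linarith
    have hfloor : (⌊a / 2 * n⌋₊ : ℝ) ≤ a / 2 * n := Nat.floor_le (by positivity)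
    have : (#{j ∈ range (n + 1) | f j ≤ n} : ℝ) ≤ J + 2 + ⌊a / 2 * n⌋₊ := by exact_mod_cast hsub
    linarith
  filter_upwards [(tendsto_const_div_atTop_nhds_zero_nat ((J : ℝ) + 2)).eventually
    (gt_mem_nhds (half_pos ha)), eventually_gt_atTop 0] with n hn hn0
  have hn0' : (0 : ℝ) < n := by exact_mod_cast hn0
  calc (#{j ∈ range (n + 1) | f j ≤ n} : ℝ) / n ≤ (J + 2 + a / 2 * n) / n := by gcongr; exact hcard n
    _ = (J + 2) / n + a / 2 := by field_simp
    _ < a := by linarith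

lemma tendsto_sum_indicator_div_zero {r : ℕ → ℕ} (hr : ∀ b, nextGap r b ≠ 0) {z : ℕ → Bool}
    (hz : SpreadRule r z) (hsite : Tendsto (fun j : ℕ => (site r 0 j : ℝ) / j) atTop atTop) :
    Tendsto (fun n : ℕ => (∑ i ∈ Icc 1 n, if z i = true then (1 : ℝ) else 0) / n)
      atTop (nhds 0) :=
  squeeze_zero (fun n => by positivity) (fun n => by
      rw [sum_boole]
      exact div_le_div_of_nonneg_right (by exact_mod_cast card_filter_le_card_site hr hz n)
        n.cast_nonneg)
    (tendsto_card_filter_le_div_zero hsite)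

section Probability

variable {Ω : Type*} {R : ℕ → Ω → ℕ}

abbrev coordSigma (R : ℕ → Ω → ℕ) (S : Set ℕ) : MeasurableSpace Ω :=
  ⨆ m ∈ S, MeasurableSpace.comap (R m) inferInstance

lemma coordSigma_mono {S T : Set ℕ} (h : S ⊆ T) : coordSigma R S ≤ coordSigma R T :=
  biSup_mono h

lemma measurableSet_coordSigma_preimage {S : Set ℕ} {m : ℕ} (hm : m ∈ S) (A : Set ℕ) :
    MeasurableSet[coordSigma R S] (R m ⁻¹' A) :=
  le_biSup (fun m => MeasurableSpace.comap (R m) inferInstance) hm _ ⟨A, trivial, rfl⟩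

lemma measurableSet_unheard {S : Set ℕ} {b K : ℕ} (h : ∀ k < K, b + (k + 1) ∈ S) :
    MeasurableSet[coordSigma R S] {ω | Unheard (R · ω) b K} := by
  simp only [Unheard, Set.ofPred_forall]
  exact .iInter fun k => .iInter fun hk => measurableSet_coordSigma_preimage (h k hk) (Set.Iic k)

lemma measurableSet_nextGap_eq_succ (b s : ℕ) :
    MeasurableSet[coordSigma R (Set.Ioc b (b + (s + 1)))] {ω | nextGap (R · ω) b = s + 1} := by
  simp only [nextGap_eq_succ_iff, Set.ofPred_and, ← Set.compl_ofPred]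
  exact (measurableSet_unheard fun k hk => by simp; omega).inter
    (measurableSet_unheard fun k hk => by simp; omega).compl

lemma measurableSet_nextGap_eq (b t : ℕ) :
    MeasurableSet[coordSigma R (Set.Ioi b)] {ω | nextGap (R · ω) b = t} := by
  rcases t with _ | s
  · simp only [nextGap_eq_zero_iff, Set.ofPred_forall]
    exact .iInter fun K => measurableSet_unheard fun k _ => by simp
  · exact coordSigma_mono Set.Ioc_subset_Ioi_self _ (measurableSet_nextGap_eq_succ b s)

lemma measurableSet_gaps_eq {j : ℕ} (x : Fin j → ℕ) {b c : ℕ} (hcb : c ≤ b) :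
    MeasurableSet[coordSigma R (Set.Ioi c)] {ω | ∀ i : Fin j, gap (R · ω) b i = x i} := by
  induction j generalizing b with
  | zero => simp
  | succ j ih =>
    simp only [gaps_eq_iff, Set.ofPred_and]
    exact (coordSigma_mono (Set.Ioi_subset_Ioi hcb) _ (measurableSet_nextGap_eq b (x 0))).inter
      (ih _ (by omega))

variable [MeasurableSpace Ω] {P : Measure Ω}

structure IsIID (R : ℕ → Ω → ℕ) (P : Measure Ω) : Prop where
  measurable : ∀ i, Measurable (R i)
  indep : iIndepFun R P
  map_eq : ∀ i, P.map (R i) = P.map (R 0)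

namespace IsIID

lemma coordSigma_le (hR : IsIID R P) (S : Set ℕ) : coordSigma R S ≤ ‹MeasurableSpace Ω› :=
  iSup₂_le fun m _ => (hR.measurable m).comap_le

lemma measure_preimage (hR : IsIID R P) (i : ℕ) (A : Set ℕ) : P (R i ⁻¹' A) = P (R 0 ⁻¹' A) := by
  rw [← Measure.map_apply (hR.measurable i) .of_discrete, hR.map_eq i,
    Measure.map_apply (hR.measurable 0) .of_discrete]

lemma measure_unheard (hR : IsIID R P) (b K : ℕ) :
    P {ω | Unheard (R · ω) b K} = ∏ k ∈ range K, P {ω | R 0 ω ≤ k} := by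
  have hind := hR.indep.precomp (g := fun k => b + (k + 1)) fun _ _ h => by simpa using h
  convert hind.measure_inter_preimage_eq_mul (range K) (sets := fun k => Set.Iic k)
    (fun _ _ => .of_discrete) using 1
  · congr 1; ext ω; simp [Unheard]
  · exact prod_congr rfl fun k _ => (hR.measure_preimage _ (Set.Iic k)).symm

lemma measure_nextGap_eq_zero (hR : IsIID R P)
    (hvanish : Tendsto (fun K => ∏ k ∈ range K, P {ω | R 0 ω ≤ k}) atTop (nhds 0)) (b : ℕ) :
    P {ω | nextGap (R · ω) b = 0} = 0 :=
  le_antisymm (ge_of_tendsto' hvanish fun K => (measure_mono fun _ h =>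
    nextGap_eq_zero_or_lt_iff.1 (Or.inl h)).trans_eq (hR.measure_unheard b K)) zero_le

lemma measure_nextGap_eq_succ [IsFiniteMeasure P] (hR : IsIID R P) (b s : ℕ) :
    P {ω | nextGap (R · ω) b = s + 1} = P {ω | nextGap (R · ω) 0 = s + 1} := by
  have hformula (c : ℕ) : P {ω | nextGap (R · ω) c = s + 1} =
      ∏ k ∈ range s, P {ω | R 0 ω ≤ k} - ∏ k ∈ range (s + 1), P {ω | R 0 ω ≤ k} := by
    have hdiff : {ω | nextGap (R · ω) c = s + 1} =
        {ω | Unheard (R · ω) c s} \ {ω | Unheard (R · ω) c (s + 1)} :=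
      Set.ext fun _ => nextGap_eq_succ_iff
    have hsub : {ω | Unheard (R · ω) c (s + 1)} ⊆ {ω | Unheard (R · ω) c s} :=
      fun _ h k hk => h k (by omega)
    rw [hdiff, measure_sdiff hsub (hR.coordSigma_le _ _
        (measurableSet_unheard (S := Set.univ) fun _ _ => trivial)).nullMeasurableSet
      (measure_ne_top _ _), hR.measure_unheard, hR.measure_unheard]
  rw [hformula, hformula]

lemma prod_le_measure_lt_nextGap (hR : IsIID R P)
    (hvanish : Tendsto (fun K => ∏ k ∈ range K, P {ω | R 0 ω ≤ k}) atTop (nhds 0)) (b K : ℕ) :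
    ∏ k ∈ range K, P {ω | R 0 ω ≤ k} ≤ P {ω | K < nextGap (R · ω) b} := by
  rw [← hR.measure_unheard b K]
  calc P {ω | Unheard (R · ω) b K}
      ≤ P ({ω | nextGap (R · ω) b = 0} ∪ {ω | K < nextGap (R · ω) b}) :=
        measure_mono fun _ h => nextGap_eq_zero_or_lt_iff.2 h
    _ ≤ P {ω | K < nextGap (R · ω) b} := by
        refine (measure_union_le _ _).trans ?_
        rw [hR.measure_nextGap_eq_zero hvanish, zero_add]

lemma measure_gaps_eq [IsProbabilityMeasure P] (hR : IsIID R P)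
    (hvanish : Tendsto (fun K => ∏ k ∈ range K, P {ω | R 0 ω ≤ k}) atTop (nhds 0))
    {j : ℕ} (x : Fin j → ℕ) (b : ℕ) :
    P {ω | ∀ i : Fin j, gap (R · ω) b i = x i} = ∏ i, P {ω | nextGap (R · ω) 0 = x i} := by
  induction j generalizing b with
  | zero => simp
  | succ j ih =>
    simp only [gaps_eq_iff, Set.ofPred_and, Fin.prod_univ_succ]
    rcases x 0 with _ | s
    · rw [hR.measure_nextGap_eq_zero hvanish 0, zero_mul]
      exact measure_mono_null Set.inter_subset_left (hR.measure_nextGap_eq_zero hvanish b)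
    · have hindep : Indep (coordSigma R (Set.Ioc b (b + (s + 1))))
          (coordSigma R (Set.Ioi (b + (s + 1)))) P :=
        indep_iSup_of_disjoint (fun i => (hR.measurable i).comap_le) hR.indep.iIndep
          (Set.Ioc_disjoint_Ioi le_rfl)
      rw [(Indep_iff _ _ P).1 hindep _ _ (measurableSet_nextGap_eq_succ b s)
        (measurableSet_gaps_eq _ le_rfl), hR.measure_nextGap_eq_succ, ih]

lemma measurable_nextGap (hR : IsIID R P) (b : ℕ) : Measurable fun ω => nextGap (R · ω) b :=
  measurable_to_countable' fun t => hR.coordSigma_le _ _ (measurableSet_nextGap_eq b t)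

lemma measurable_gaps (hR : IsIID R P) (b j : ℕ) :
    Measurable fun ω (i : Fin j) => gap (R · ω) b i :=
  measurable_to_countable' fun x => by
    convert hR.coordSigma_le _ _ (measurableSet_gaps_eq (R := R) x (le_refl b)) using 1
    ext ω
    simp [funext_iff]

lemma measurable_gap (hR : IsIID R P) (b i : ℕ) : Measurable fun ω => gap (R · ω) b i :=
  (measurable_pi_apply (⟨i, i.lt_succ_self⟩ : Fin (i + 1))).comp (hR.measurable_gaps b (i + 1))

lemma map_gaps_eq_pi [IsProbabilityMeasure P] (hR : IsIID R P)
    (hvanish : Tendsto (fun K => ∏ k ∈ range K, P {ω | R 0 ω ≤ k}) atTop (nhds 0)) (b j : ℕ) :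
    P.map (fun ω (i : Fin j) => gap (R · ω) b i) =
      Measure.pi fun _ => P.map fun ω => nextGap (R · ω) 0 := by
  refine Measure.ext_of_singleton fun x => ?_
  rw [Measure.map_apply (hR.measurable_gaps b j) (measurableSet_singleton x), Measure.pi_singleton]
  simp_rw [Measure.map_apply (hR.measurable_nextGap 0) (measurableSet_singleton _)]
  convert hR.measure_gaps_eq hvanish x b using 2
  · ext ω
    simp [funext_iff]
  · rfl

lemma map_gap_eq [IsProbabilityMeasure P] (hR : IsIID R P)
    (hvanish : Tendsto (fun K => ∏ k ∈ range K, P {ω | R 0 ω ≤ k}) atTop (nhds 0)) (b i : ℕ) :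
    P.map (fun ω => gap (R · ω) b i) = P.map fun ω => nextGap (R · ω) 0 := by
  have := Measure.isProbabilityMeasure_map (μ := P) (hR.measurable_nextGap 0).aemeasurable
  have := congrArg (Measure.map (Function.eval (⟨i, i.lt_succ_self⟩ : Fin (i + 1))))
    (hR.map_gaps_eq_pi hvanish b (i + 1))
  rwa [Measure.map_map (measurable_pi_apply _) (hR.measurable_gaps _ _),
    (measurePreserving_eval _ _).map_eq] at this

lemma iIndepFun_gaps [IsProbabilityMeasure P] (hR : IsIID R P)
    (hvanish : Tendsto (fun K => ∏ k ∈ range K, P {ω | R 0 ω ≤ k}) atTop (nhds 0)) (b j : ℕ) :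
    iIndepFun (fun (i : Fin j) ω => gap (R · ω) b i) P := by
  rw [iIndepFun_iff_map_fun_eq_pi_map fun i : Fin j => (hR.measurable_gap b i).aemeasurable]
  simp_rw [hR.map_gap_eq hvanish b]
  exact hR.map_gaps_eq_pi hvanish b j

lemma ae_nextGap_ne_zero (hR : IsIID R P)
    (hvanish : Tendsto (fun K => ∏ k ∈ range K, P {ω | R 0 ω ≤ k}) atTop (nhds 0)) :
    ∀ᵐ ω ∂P, ∀ b, nextGap (R · ω) b ≠ 0 :=
  ae_all_iff.2 fun b => ae_iff.2 (by simpa using hR.measure_nextGap_eq_zero hvanish b)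

end IsIID

lemma integral_natCast_min_eq_sum [IsFiniteMeasure P] {T : Ω → ℕ} (hT : Measurable T) (c : ℕ) :
    ∫ ω, ((min (T ω) c : ℕ) : ℝ) ∂P = ∑ k ∈ range c, P.real {ω | k < T ω} := by
  have hmeas (k : ℕ) : MeasurableSet {ω | k < T ω} := hT measurableSet_Ioi
  have hmin (ω : Ω) : ((min (T ω) c : ℕ) : ℝ) = ∑ k ∈ range c, {ω | k < T ω}.indicator 1 ω := by
    simp only [Set.indicator_apply, Set.mem_ofPred_eq, Pi.one_apply, sum_boole]
    rw [show {k ∈ range c | k < T ω} = range (min (T ω) c) by ext; simp; omega, card_range]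
  rw [integral_congr_ae (ae_of_all _ hmin),
    integral_finsetSum _ fun k _ => (integrable_const 1).indicator (hmeas k)]
  exact sum_congr rfl fun k _ => integral_indicator_one (hmeas k)

lemma ae_tendsto_sum_div_atTop [IsProbabilityMeasure P] {X : ℕ → Ω → ℕ}
    (hX : ∀ i, Measurable (X i)) (hindep : Pairwise fun i j => IndepFun (X i) (X j) P)
    (hident : ∀ i, IdentDistrib (X i) (X 0) P P)
    (hmean : Tendsto (fun c : ℕ => ∫ ω, ((min (X 0 ω) c : ℕ) : ℝ) ∂P) atTop atTop) :
    ∀ᵐ ω ∂P, Tendsto (fun n : ℕ => (∑ i ∈ range n, (X i ω : ℝ)) / n) atTop atTop := by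
  let φ (c t : ℕ) : ℝ := ((min t c : ℕ) : ℝ)
  have hφ (c : ℕ) : Measurable (φ c) := measurable_from_nat
  have hint (c : ℕ) : Integrable (fun ω => φ c (X 0 ω)) P :=
    .of_bound ((hφ c).comp (hX 0)).aestronglyMeasurable c (ae_of_all _ fun ω => by
      rw [Real.norm_natCast]
      exact_mod_cast min_le_right _ _)
  have hslln : ∀ᵐ ω ∂P, ∀ c, Tendsto (fun n : ℕ => (n : ℝ)⁻¹ • ∑ i ∈ range n, φ c (X i ω))
      atTop (nhds (∫ ω, φ c (X 0 ω) ∂P)) :=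
    ae_all_iff.2 fun c => strong_law_ae (fun i ω => φ c (X i ω)) (hint c)
      (fun i j hij => (hindep hij).comp (hφ c) (hφ c)) (fun i => (hident i).comp (hφ c))
  filter_upwards [hslln] with ω hω
  refine tendsto_atTop.2 fun M => ?_
  obtain ⟨c, hc⟩ := (tendsto_atTop.1 hmean (M + 1)).exists
  filter_upwards [(hω c).eventually (eventually_ge_nhds (show M < ∫ ω, φ c (X 0 ω) ∂P by
    linarith))] with n hn
  calc M ≤ (n : ℝ)⁻¹ • ∑ i ∈ range n, φ c (X i ω) := hn
    _ ≤ (∑ i ∈ range n, (X i ω : ℝ)) / n := by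
      rw [smul_eq_mul, inv_mul_eq_div]
      gcongr with i
      exact Nat.cast_le.2 (min_le_left _ _)

theorem IsIID.ae_tendsto_site_div_atTop [IsProbabilityMeasure P] (hR : IsIID R P)
    (hvanish : Tendsto (fun K => ∏ k ∈ range K, P {ω | R 0 ω ≤ k}) atTop (nhds 0))
    (hmean : Tendsto (fun c => ∑ k ∈ range c, ∏ i ∈ range k, P.real {ω | R 0 ω ≤ i})
      atTop atTop) :
    ∀ᵐ ω ∂P, Tendsto (fun j : ℕ => (site (R · ω) 0 j : ℝ) / j) atTop atTop := by
  have hident (i : ℕ) : IdentDistrib (fun ω => gap (R · ω) 0 i) (fun ω => gap (R · ω) 0 0) P P :=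
    ⟨(hR.measurable_gap 0 i).aemeasurable, (hR.measurable_gap 0 0).aemeasurable,
      by rw [hR.map_gap_eq hvanish, hR.map_gap_eq hvanish]⟩
  have hindep : Pairwise fun i j =>
      IndepFun (fun ω => gap (R · ω) 0 i) (fun ω => gap (R · ω) 0 j) P := fun i j hij =>
    (hR.iIndepFun_gaps hvanish 0 (max i j + 1)).indepFun (i := ⟨i, by omega⟩)
      (j := ⟨j, by omega⟩) (by simpa [Fin.ext_iff] using hij)
  have htail (k : ℕ) :
      ∏ i ∈ range k, P.real {ω | R 0 ω ≤ i} ≤ P.real {ω | k < gap (R · ω) 0 0} := by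
    simp only [measureReal_def, ← ENNReal.toReal_prod]
    exact ENNReal.toReal_mono (measure_ne_top _ _) (hR.prod_le_measure_lt_nextGap hvanish 0 k)
  have htrunc : Tendsto (fun c : ℕ => ∫ ω, ((min (gap (R · ω) 0 0) c : ℕ) : ℝ) ∂P)
      atTop atTop := tendsto_atTop_mono (fun c => by
        rw [integral_natCast_min_eq_sum (hR.measurable_gap 0 0)]
        exact sum_le_sum fun k _ => htail k) hmean
  filter_upwards [ae_tendsto_sum_div_atTop (hR.measurable_gap 0) hindep hident htrunc] with ω hω
  simpa only [site_eq_add_sum, zero_add, Nat.cast_sum] using hω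

end Probability

end ReverseFirework

open ReverseFirework

theorem rumor_stmt_19_general {Ω : Type*} [MeasurableSpace Ω] (P : Measure Ω) [IsProbabilityMeasure P]
    (R : ℕ → Ω → ℕ) (hmeas : ∀ i, Measurable (R i))
    (hindep : iIndepFun R P)
    (hident : ∀ i, Measure.map (R i) P = Measure.map (R 0) P)
    (α : ℕ → ℝ) (hα : ∀ k, P {ω | R 0 ω ≤ k} = ENNReal.ofReal (α k))
    (h01 : ∀ k, 0 ≤ α k ∧ α k ≤ 1)
    (hprod0 : Tendsto (fun n => ∏ i ∈ Finset.range n, α i) atTop (nhds 0))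
    (hμinf : ¬ Summable fun j : ℕ => ∏ i ∈ Finset.range (j + 1), α i)
    (ζ : ℕ → Ω → Bool)
    (hζ0 : ∀ ω, ζ 0 ω = true)
    (hζ : ∀ n : ℕ, 0 < n → ∀ ω,
      (ζ n ω = true ↔ ∃ m < n, ζ m ω = true ∧ n - m ≤ R n ω)) :
    P {ω | {n : ℕ | ζ n ω = true}.Infinite} = 1 ∧
      ∀ᵐ ω ∂P, Tendsto
        (fun n : ℕ => (∑ i ∈ Finset.Icc 1 n, (if ζ i ω = true then (1 : ℝ) else 0)) / n)
        atTop (nhds 0) := by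
  have hR : IsIID R P := ⟨hmeas, hindep, hident⟩
  have hvanish : Tendsto (fun K => ∏ k ∈ range K, P {ω | R 0 ω ≤ k}) atTop (nhds 0) := by
    simp_rw [hα, ← ENNReal.ofReal_prod_of_nonneg fun k _ => (h01 k).1]
    simpa using ENNReal.tendsto_ofReal hprod0
  have hmean : Tendsto (fun c => ∑ k ∈ range c, ∏ i ∈ range k, P.real {ω | R 0 ω ≤ i})
      atTop atTop := by
    simp_rw [measureReal_def, hα, fun k => ENNReal.toReal_ofReal (h01 k).1]
    refine (not_summable_iff_tendsto_nat_atTop_of_nonneg fun k =>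
      prod_nonneg fun i _ => (h01 i).1).1 fun hs => hμinf ?_
    exact (summable_nat_add_iff (f := fun k => ∏ i ∈ range k, α i) 1).2 hs
  have hrule (ω : Ω) : SpreadRule (R · ω) (ζ · ω) := fun n hn => hζ n hn ω
  have hgood := hR.ae_nextGap_ne_zero hvanish
  refine ⟨le_antisymm prob_le_one (measure_univ.symm.le.trans (measure_mono_ae ?_)), ?_⟩
  · filter_upwards [hgood] with ω hr _
    exact (Set.infinite_range_of_injective (site_strictMono hr).injective).mono
      (range_site_subset_setOf hr (hζ0 ω) (hrule ω))
  · filter_upwards [hgood, hR.ae_tendsto_site_div_atTop hvanish hmean] with ω hr hsite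
    exact tendsto_sum_indicator_div_zero hr (hrule ω) hsite

/-- if `∏_{k≥0} α_k = 0` and `μ = 1 + ∑_{j≥1} ∏_{i=0}^{j-1} α_i = ∞`, then in
the Reverse Firework process the rumor survives almost surely (infinitely many individuals
are informed), but the asymptotic proportion of informed individuals is zero:
`N(n)/n → 0` almost surely. -/
theorem rumor_stmt_19 {Ω : Type*} [MeasurableSpace Ω] (P : Measure Ω) [IsProbabilityMeasure P]
    (R : ℕ → Ω → ℕ) (hmeas : ∀ i, Measurable (R i))
    (hindep : iIndepFun R P)
    (hident : ∀ i, Measure.map (R i) P = Measure.map (R 0) P)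
    (α : ℕ → ℝ) (hα : ∀ k, P {ω | R 0 ω ≤ k} = ENNReal.ofReal (α k))
    (hmono : Monotone α) (h01 : ∀ k, 0 ≤ α k ∧ α k ≤ 1) (hα0 : 0 < α 0 ∧ α 0 < 1)
    (hprod0 : Tendsto (fun n => ∏ i ∈ Finset.range n, α i) atTop (nhds 0))
    (hμinf : ¬ Summable fun j : ℕ => ∏ i ∈ Finset.range (j + 1), α i)
    (ζ : ℕ → Ω → Bool)
    (hζ0 : ∀ ω, ζ 0 ω = true)
    (hζ : ∀ n : ℕ, 0 < n → ∀ ω,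
      (ζ n ω = true ↔ ∃ m < n, ζ m ω = true ∧ n - m ≤ R n ω)) :
    P {ω | {n : ℕ | ζ n ω = true}.Infinite} = 1 ∧
      ∀ᵐ ω ∂P, Tendsto
        (fun n : ℕ => (∑ i ∈ Finset.Icc 1 n, (if ζ i ω = true then (1 : ℝ) else 0)) / n)
        atTop (nhds 0) :=
  rumor_stmt_19_general P R hmeas hindep hident α hα h01 hprod0 hμinf ζ hζ0 hζ
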